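/- arXiv:2206.06835 — 2 statements merged into one kernel-verified Lean document; each statement's English description precedes it below -/
import Mathlib

section
/- Let p be a prime, s ≥ 1, and q = p^s. Let P, Q ∈ ℤ[x₁, …, x_N] each have degree at most 1 in each variable and have every coefficient equal to 0 or 1. Then the coefficient of (x₁⋯x_N)^{q−1} in (PQ)^{q−1} is congruent modulo p to the s-th power of the coefficient of (x₁⋯x_N)^{p−1} in (PQ)^{p−1}. -/
/-!
Reduce modulo `p` and put `f = PQ`, which has degree at most 2 in each variable. Over `𝔽_p`,
`f ^ (p q - 1) = f ^ (p - 1) · expand p (f ^ (q - 1))` by Frobenius. In the coefficient of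
`(x₁⋯x_N)^{pq-1}` only one product of coefficients survives: an exponent of `f ^ (p - 1)` is at
most `2p - 2` in each variable and must be `≡ -1 (mod p)`, so it is `p - 1`. Hence the
coefficient for `pq` is the one for `p` times the one for `q`, and induction on `s` finishes.
-/

open MvPolynomial

variable {σ R : Type*}

/-- The exponent of the monomial `(∏ i, X i) ^ n`. -/
noncomputable def diagExp (σ : Type*) [Finite σ] (n : ℕ) : σ →₀ ℕ :=
  Finsupp.equivFunOnFinite.symm fun _ => n

@[simp]
lemma diagExp_apply [Finite σ] (n : ℕ) (i : σ) : diagExp σ n i = n := rfl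

@[simp]
lemma diagExp_zero [Finite σ] : diagExp σ 0 = 0 := by
  ext
  rfl

lemma diagExp_mul_sub_one [Finite σ] {p q : ℕ} (hq : 0 < q) :
    diagExp σ (p * q - 1) = diagExp σ (p - 1) + p • diagExp σ (q - 1) := by
  ext i
  show p * q - 1 = p - 1 + p * (q - 1)
  have : p ≤ p * q := Nat.le_mul_of_pos_right p hq
  rw [Nat.mul_sub_one]
  grind

lemma Nat.eq_sub_one_of_add_eq_mul_sub_one {p q a b : ℕ} (ha : a ≤ 2 * (p - 1)) (hb : p ∣ b)
    (hab : a + b = p * q - 1) (hq : 0 < q) : a = p - 1 := by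
  rcases Nat.eq_zero_or_pos p with rfl | hp
  · simpa using ha
  have hpq : p ≤ p * q := Nat.le_mul_of_pos_right p hq
  have hdvd : p ∣ a + 1 :=
    (Nat.dvd_add_right hb).mp (by rw [show b + (a + 1) = p * q by omega]; exact dvd_mul_right p q)
  have := Nat.eq_of_dvd_of_lt_two_mul (Nat.succ_ne_zero a) hdvd (by omega)
  omega

lemma degreeOf_map_le [CommSemiring R] {S : Type*} [CommSemiring S] (φ : R →+* S)
    (F : MvPolynomial σ R) (i : σ) : (map φ F).degreeOf i ≤ F.degreeOf i := by
  classical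
  simpa only [degreeOf_def] using Multiset.count_le_of_le i degrees_map_le

lemma coeff_diagExp_mul_expand [CommSemiring R] [Finite σ] {p q : ℕ} (hp : 0 < p) (hq : 0 < q)
    (f g : MvPolynomial σ R) (hf : ∀ i, f.degreeOf i ≤ 2 * (p - 1)) :
    (f * expand p g).coeff (diagExp σ (p * q - 1))
      = f.coeff (diagExp σ (p - 1)) * g.coeff (diagExp σ (q - 1)) := by
  classical
  rw [diagExp_mul_sub_one hq, coeff_mul,
    Finset.sum_eq_single_of_mem (diagExp σ (p - 1), p • diagExp σ (q - 1))
      (Finset.HasAntidiagonal.mem_antidiagonal.mpr rfl), coeff_expand_smul p hp.ne']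
  rintro ⟨a, b⟩ hab hne
  rw [Finset.HasAntidiagonal.mem_antidiagonal] at hab
  by_contra hcoeff
  dsimp only at hab hcoeff ⊢
  have ha : a = diagExp σ (p - 1) := by
    ext i
    have hai : a i ≤ 2 * (p - 1) :=
      (monomial_le_degreeOf i (mem_support_iff.mpr (left_ne_zero_of_mul hcoeff))).trans (hf i)
    have hbi : p ∣ b i := by_contra fun h =>
      right_ne_zero_of_mul hcoeff (coeff_expand_of_not_dvd g h)
    refine Nat.eq_sub_one_of_add_eq_mul_sub_one hai hbi ?_ hq
    simpa [← diagExp_mul_sub_one hq] using DFunLike.congr_fun hab i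
  subst ha
  exact hne (by rw [add_left_cancel hab])

lemma coeff_diagExp_pow_prime_pow_sub_one {p : ℕ} [Fact p.Prime] [Finite σ]
    (f : MvPolynomial σ (ZMod p)) (hf : ∀ i, f.degreeOf i ≤ 2) (s : ℕ) :
    (f ^ (p ^ s - 1)).coeff (diagExp σ (p ^ s - 1))
      = (f ^ (p - 1)).coeff (diagExp σ (p - 1)) ^ s := by
  have hp := (Fact.out : p.Prime).pos
  have hdeg : ∀ i, (f ^ (p - 1)).degreeOf i ≤ 2 * (p - 1) := fun i =>
    (degreeOf_pow_le i f _).trans ((Nat.mul_le_mul_left _ (hf i)).trans_eq (mul_comm _ _))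
  induction s with
  | zero => simp
  | succ s ih =>
    have hq : 0 < p ^ s := pow_pos hp s
    have hsplit : f ^ (p * p ^ s - 1) = f ^ (p - 1) * expand p (f ^ (p ^ s - 1)) := by
      rw [expand_zmod, ← pow_mul, ← pow_add]
      congr 1
      have : p ≤ p * p ^ s := Nat.le_mul_of_pos_right p hq
      rw [Nat.sub_one_mul, mul_comm (p ^ s)]
      omega
    rw [pow_succ', hsplit, coeff_diagExp_mul_expand hp hq _ _ hdeg, ih, pow_succ']

theorem statement3_general (p s N : ℕ) [Fact p.Prime]
    (P Q : MvPolynomial (Fin N) ℤ)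
    (hPlin : ∀ j, P.degreeOf j ≤ 1) (hQlin : ∀ j, Q.degreeOf j ≤ 1) :
    ((((P * Q) ^ (p ^ s - 1)).coeff
        (Finsupp.equivFunOnFinite.symm fun _ => p ^ s - 1) : ℤ) : ZMod p)
      = ((((P * Q) ^ (p - 1)).coeff
        (Finsupp.equivFunOnFinite.symm fun _ => p - 1) : ℤ) : ZMod p) ^ s := by
  have hdeg : ∀ j, (map (Int.castRingHom (ZMod p)) (P * Q)).degreeOf j ≤ 2 := fun j =>
    (degreeOf_map_le _ _ j).trans <| (degreeOf_mul_le j P Q).trans <| by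
      have := hPlin j; have := hQlin j; omega
  have key := coeff_diagExp_pow_prime_pow_sub_one _ hdeg s
  rwa [← map_pow, ← map_pow, coeff_map, coeff_map] at key

/-- Let `p` be a prime, `s ≥ 1`, `q = p^s`. Let `P, Q ∈ ℤ[x₁,…,x_N]` be
linear in each variable with all coefficients `0` or `1`. Then the coefficient of
`(x₁⋯x_N)^{q−1}` in `(PQ)^{q−1}` is congruent mod `p` to the `s`-th power of the
coefficient of `(x₁⋯x_N)^{p−1}` in `(PQ)^{p−1}`. -/
theorem statement3 (p s N : ℕ) [Fact p.Prime] (hs : 1 ≤ s)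
    (P Q : MvPolynomial (Fin N) ℤ)
    (hPlin : ∀ j, P.degreeOf j ≤ 1) (hQlin : ∀ j, Q.degreeOf j ≤ 1)
    (hPcoeff : ∀ d, P.coeff d = 0 ∨ P.coeff d = 1)
    (hQcoeff : ∀ d, Q.coeff d = 0 ∨ Q.coeff d = 1) :
    ((((P * Q) ^ (p ^ s - 1)).coeff
        (Finsupp.equivFunOnFinite.symm fun _ => p ^ s - 1) : ℤ) : ZMod p)
      = ((((P * Q) ^ (p - 1)).coeff
        (Finsupp.equivFunOnFinite.symm fun _ => p - 1) : ℤ) : ZMod p) ^ s :=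
  statement3_general p s N P Q hPlin hQlin
end

section
/- Let p be a prime and i ≥ 0. Let P ∈ ℤ[x₁, …, x_N] have degree at most 1 in each variable and have every coefficient equal to 0 or 1. Let m be a monomial whose coefficient in P^{p^i} is nonzero. If every variable appears in m with exponent 0 or p^i, then the coefficient of m in P^{p^i} is congruent to 1 modulo p. -/
/-!
If `P` has degree at most one in every variable and `d` is a squarefree exponent vector, then
the only way to write `n • d` as a sum of `n` exponents of `P` is `d + ⋯ + d`, so the
coefficient of `n • d` in `P ^ n` is `(coeff d P) ^ n`. An exponent vector with entries in
`{0, n}` has the form `n • d`, and `(coeff d P) ^ n ∈ {0, 1}` is nonzero, hence equal to `1`.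
-/

open MvPolynomial

namespace Finsupp

variable {σ : Type*}

theorem eq_of_add_eq_succ_nsmul {a b d : σ →₀ ℕ} {n : ℕ} (ha : ∀ j, a j ≤ n)
    (hb : ∀ j, b j ≤ 1) (hd : ∀ j, d j ≤ 1) (h : a + b = (n + 1) • d) : a = n • d ∧ b = d := by
  have hj : ∀ j, a j = n * d j ∧ b j = d j := by
    intro j
    have hsum : a j + b j = (n + 1) * d j := by simpa using DFunLike.congr_fun h j
    have := ha j
    have := hb j
    rcases Nat.le_one_iff_eq_zero_or_eq_one.mp (hd j) with h0 | h1
    · rw [h0] at hsum ⊢; omega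
    · rw [h1] at hsum ⊢; omega
  exact ⟨ext fun j => by simpa using (hj j).1, ext fun j => (hj j).2⟩

theorem exists_eq_nsmul_of_forall_eq_zero_or_eq {m : σ →₀ ℕ} {n : ℕ}
    (hm : ∀ j, m j = 0 ∨ m j = n) : ∃ d : σ →₀ ℕ, (∀ j, d j ≤ 1) ∧ m = n • d := by
  refine ⟨m.mapRange (min · 1) (by simp), fun j => by simp, ext fun j => ?_⟩
  rcases hm j with h | h
  · simp [h]
  · rcases Nat.eq_zero_or_pos n with hn | hn
    · simp [h, hn]
    · simp [h, Nat.min_eq_right hn]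

end Finsupp

namespace MvPolynomial

variable {σ R : Type*} [CommSemiring R] {P : MvPolynomial σ R}

theorem apply_le_of_mem_support_pow (hP : ∀ j, P.degreeOf j ≤ 1) {n : ℕ} {a : σ →₀ ℕ}
    (ha : a ∈ (P ^ n).support) (j : σ) : a j ≤ n :=
  calc a j ≤ (P ^ n).degreeOf j := monomial_le_degreeOf j ha
    _ ≤ n * P.degreeOf j := degreeOf_pow_le j P n
    _ ≤ n := by simpa using Nat.mul_le_mul_left n (hP j)

theorem coeff_pow_nsmul_of_degreeOf_le_one (hP : ∀ j, P.degreeOf j ≤ 1) {d : σ →₀ ℕ}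
    (hd : ∀ j, d j ≤ 1) (n : ℕ) : (P ^ n).coeff (n • d) = P.coeff d ^ n := by
  classical
  induction n with
  | zero => simp
  | succ n ih =>
    rw [pow_succ, coeff_mul, Finset.sum_eq_single (n • d, d), ih, pow_succ]
    · rintro ⟨a, b⟩ hab hne
      rw [Finset.HasAntidiagonal.mem_antidiagonal] at hab
      by_contra hprod
      have ha : a ∈ (P ^ n).support := mem_support_iff.mpr (left_ne_zero_of_mul hprod)
      have hb : b ∈ P.support := mem_support_iff.mpr (right_ne_zero_of_mul hprod)
      obtain ⟨rfl, rfl⟩ := Finsupp.eq_of_add_eq_succ_nsmul (apply_le_of_mem_support_pow hP ha)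
        (fun j => (monomial_le_degreeOf j hb).trans (hP j)) hd hab
      exact hne rfl
    · exact fun h => (h (Finset.HasAntidiagonal.mem_antidiagonal.mpr (succ_nsmul d n).symm)).elim

end MvPolynomial

theorem statement5_general (p i N : ℕ)
    (P : MvPolynomial (Fin N) ℤ)
    (hlin : ∀ j, P.degreeOf j ≤ 1)
    (hcoeff : ∀ d, P.coeff d = 0 ∨ P.coeff d = 1)
    (m : Fin N →₀ ℕ)
    (hm : (P ^ p ^ i).coeff m ≠ 0)
    (hvar : ∀ j, m j = 0 ∨ m j = p ^ i) :
    (((P ^ p ^ i).coeff m : ℤ) : ZMod p) = 1 := by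
  obtain ⟨d, hd, rfl⟩ := Finsupp.exists_eq_nsmul_of_forall_eq_zero_or_eq hvar
  rw [coeff_pow_nsmul_of_degreeOf_le_one hlin hd] at hm ⊢
  have hpow : P.coeff d ^ p ^ i = 1 := by
    rcases hcoeff d with h | h <;> rw [h] at hm ⊢
    · rw [not_not.mp (mt zero_pow_eq_zero.mpr hm), pow_zero]
    · exact one_pow _
  rw [hpow, Int.cast_one]

/-- Let `p` be prime, `i ≥ 0`, and `P ∈ ℤ[x₁,…,x_N]` linear in each
variable with all coefficients `0` or `1`. If a monomial `m` with nonzero coefficient in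
`P^{p^i}` has every variable's exponent equal to `0` or `p^i`, then the coefficient of
`m` in `P^{p^i}` is `≡ 1 (mod p)`. -/
theorem statement5 (p i N : ℕ) [Fact p.Prime]
    (P : MvPolynomial (Fin N) ℤ)
    (hlin : ∀ j, P.degreeOf j ≤ 1)
    (hcoeff : ∀ d, P.coeff d = 0 ∨ P.coeff d = 1)
    (m : Fin N →₀ ℕ)
    (hm : (P ^ p ^ i).coeff m ≠ 0)
    (hvar : ∀ j, m j = 0 ∨ m j = p ^ i) :
    (((P ^ p ^ i).coeff m : ℤ) : ZMod p) = 1 :=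
  statement5_general p i N P hlin hcoeff m hm hvar
end
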